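/- arXiv:2505.13396 — 8 statements merged into one kernel-verified Lean document; each statement's English description precedes it below -/
import Mathlib

section
/- Let G be a finite simple graph on n ≥ 1 vertices with maximum degree Δ, and let d_u denote the degree of vertex u. Then for every real λ with 0 < λ ≤ 3/(Δ+1)², one has (1/n)·Σ_{u∈V(G)} λ/(1+(d_u+1)λ) ≤ E_G(λ). -/
/-!
Write `Q_v` for the partition function of `G - N[v]`. Counting pairs `(I, v)` with `v ∈ I` gives
`Σ_I |I| λ^|I| = λ Σ_v Q_v`, and since an independent set either avoids `N[v]` or contains a
vertex of it, `Z ≤ Q_v + λ Σ_{u ∈ N[v]} Q_u`; that is, `Z·1 ≤ M Q` for `M = I + λ(I + A)`.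
When `λΔ < 1` (which follows from `λ ≤ 3/(Δ+1)²`), `M` is positive definite and the solution of
`M w = 1` is nonnegative (compare `w` at its maximum and at its minimum), so
`Σ Q = ⟨M w, Q⟩ = ⟨w, M Q⟩ ≥ Z Σ w`. Finally `t_v = 1/(1 + (d_v+1)λ)` solves `(M + λL) t = 1`,
`L` the Laplacian, and `Σ w - Σ t = λ⟨t, L t⟩ + ⟨w - t, M (w - t)⟩ ≥ 0`.
-/
open scoped Classical

/-- The finset of independent sets of a finite simple graph (the empty set counts). -/
noncomputable def indepSets {V : Type*} [Fintype V] (G : SimpleGraph V) : Finset (Finset V) :=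
  Finset.univ.filter fun I => ∀ u ∈ I, ∀ v ∈ I, ¬ G.Adj u v

/-- The hard-core partition function `Z_G(λ) = Σ_{I independent} λ^|I|`. -/
noncomputable def hcZ {V : Type*} [Fintype V] (G : SimpleGraph V) (l : ℝ) : ℝ :=
  ∑ I ∈ indepSets G, l ^ I.card

/-- The occupancy fraction `E_G(λ) = λ Z_G'(λ)/(n Z_G(λ))`, i.e. `(1/n)` times the
expected size of an independent set from the hard-core model; note
`λ Z_G'(λ) = Σ_I |I| λ^|I|`. -/
noncomputable def hcE {V : Type*} [Fintype V] (G : SimpleGraph V) (l : ℝ) : ℝ :=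
  (∑ I ∈ indepSets G, (I.card : ℝ) * l ^ I.card) / ((Fintype.card V : ℝ) * hcZ G l)

open Finset Matrix

section LinearAlgebra

variable {n : Type*} [Fintype n]

lemma Matrix.IsSymm.dotProduct_mulVec_comm {α : Type*} [CommSemiring α] {M : Matrix n n α}
    (hM : M.IsSymm) (x y : n → α) :
    x ⬝ᵥ (M *ᵥ y) = (M *ᵥ x) ⬝ᵥ y := by
  rw [dotProduct_mulVec, ← mulVec_transpose, hM.eq]

lemma mul_sum_le_sum_of_le_mulVec {α : Type*} [CommSemiring α] [PartialOrder α]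
    [IsOrderedRing α] {M : Matrix n n α} (hM : M.IsSymm) {w x : n → α}
    (hw : 0 ≤ w) (hMw : M *ᵥ w = 1) {c : α} (hx : ∀ i, c ≤ (M *ᵥ x) i) :
    c * ∑ i, w i ≤ ∑ i, x i := calc
  c * ∑ i, w i = ∑ i, c * w i := mul_sum _ _ _
  _ ≤ ∑ i, (M *ᵥ x) i * w i := sum_le_sum fun i _ => mul_le_mul_of_nonneg_right (hx i) (hw i)
  _ = ∑ i, x i := by rw [← dotProduct_one x, ← hMw, hM.dotProduct_mulVec_comm]; rfl

lemma sum_le_sum_of_mulVec_eq_one {M L : Matrix n n ℝ} (hM : M.PosSemidef)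
    (hL : L.PosSemidef) {c : ℝ} (hc : 0 ≤ c) {t w : n → ℝ} (hMw : M *ᵥ w = 1)
    (hMt : (M + c • L) *ᵥ t = 1) : ∑ i, t i ≤ ∑ i, w i := by
  have hsymm : M.IsSymm := by simpa using hM.isHermitian
  have hMe : M *ᵥ (w - t) = c • (L *ᵥ t) := by
    rw [add_mulVec, smul_mulVec] at hMt
    rw [mulVec_sub, hMw, ← hMt, add_sub_cancel_left]
  have key : ∑ i, w i - ∑ i, t i = c * (t ⬝ᵥ (L *ᵥ t)) + (w - t) ⬝ᵥ (M *ᵥ (w - t)) := calc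
    ∑ i, w i - ∑ i, t i = (M *ᵥ w) ⬝ᵥ (w - t) := by
      rw [hMw, one_dotProduct, ← sum_sub_distrib]; rfl
    _ = w ⬝ᵥ (c • (L *ᵥ t)) := by rw [← hsymm.dotProduct_mulVec_comm, hMe]
    _ = c * (t ⬝ᵥ (L *ᵥ t)) + (w - t) ⬝ᵥ (M *ᵥ (w - t)) := by
      rw [hMe, dotProduct_smul, dotProduct_smul, ← add_sub_cancel t w, add_dotProduct]
      simp only [smul_eq_mul, add_sub_cancel]; ring
  have hLt := hL.dotProduct_mulVec_nonneg t
  have hMe' := hM.dotProduct_mulVec_nonneg (w - t)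
  simp only [star_trivial] at hLt hMe'
  nlinarith [mul_nonneg hc hLt]

end LinearAlgebra

namespace SimpleGraph

variable {V : Type*} [Fintype V] (G : SimpleGraph V)

lemma neg_maxDegree_mul_le_dotProduct_adjMatrix_mulVec (x : V → ℝ) :
    -(G.maxDegree * (x ⬝ᵥ x)) ≤ x ⬝ᵥ (G.adjMatrix ℝ *ᵥ x) := by
  set y : V → ℝ := fun v => |x v|
  have habs : -(y ⬝ᵥ (G.adjMatrix ℝ *ᵥ y)) ≤ x ⬝ᵥ (G.adjMatrix ℝ *ᵥ x) := by
    simp only [dotProduct_mulVec_adjMatrix, ← sum_neg_distrib]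
    refine sum_le_sum fun i _ => sum_le_sum fun j _ => ?_
    split_ifs
    · rw [← abs_mul]; exact neg_abs_le _
    · simp
  have hlap : y ⬝ᵥ (G.adjMatrix ℝ *ᵥ y) ≤ y ⬝ᵥ (G.degMatrix ℝ *ᵥ y) := by
    have := (G.posSemidef_lapMatrix ℝ).dotProduct_mulVec_nonneg y
    rw [star_trivial, lapMatrix, sub_mulVec, dotProduct_sub] at this
    linarith
  have hdeg : y ⬝ᵥ (G.degMatrix ℝ *ᵥ y) ≤ G.maxDegree * (x ⬝ᵥ x) := by
    rw [dotProduct_mulVec_degMatrix, dotProduct, mul_sum]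
    refine sum_le_sum fun i _ => ?_
    rw [mul_assoc, abs_mul_abs_self]
    exact mul_le_mul_of_nonneg_right (mod_cast G.degree_le_maxDegree i) (mul_self_nonneg _)
  linarith

noncomputable def hcMatrix (l : ℝ) : Matrix V V ℝ := 1 + l • (1 + G.adjMatrix ℝ)

variable {G} {l : ℝ}

lemma hcMatrix_mulVec_apply (x : V → ℝ) (v : V) :
    (G.hcMatrix l *ᵥ x) v = (1 + l) * x v + l * ∑ u ∈ G.neighborFinset v, x u := by
  simp [hcMatrix, add_mulVec, smul_mulVec, adjMatrix_mulVec_apply]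
  ring

omit [Fintype V] in
lemma isSymm_hcMatrix : (G.hcMatrix l).IsSymm := by
  simp [hcMatrix, IsSymm, transpose_add, transpose_smul, transpose_adjMatrix]

lemma posDef_hcMatrix (hl : 0 ≤ l) (hlΔ : l * G.maxDegree < 1) : (G.hcMatrix l).PosDef := by
  refine .of_dotProduct_mulVec_pos (by simpa using isSymm_hcMatrix) fun x hx => ?_
  have hxx : 0 < x ⬝ᵥ x := by simpa using dotProduct_star_self_pos_iff.mpr hx
  have := G.neg_maxDegree_mul_le_dotProduct_adjMatrix_mulVec x
  rw [star_trivial, hcMatrix, add_mulVec, smul_mulVec, add_mulVec, one_mulVec, dotProduct_add,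
    dotProduct_smul, dotProduct_add, smul_eq_mul]
  nlinarith

lemma nonneg_of_hcMatrix_mulVec_eq_one (hl : 0 ≤ l) (hlΔ : l * G.maxDegree < 1) {w : V → ℝ}
    (hw : G.hcMatrix l *ᵥ w = 1) : 0 ≤ w := by
  intro v
  have hw' : ∀ v, (1 + l) * w v + l * ∑ u ∈ G.neighborFinset v, w u = 1 := fun v => by
    rw [← hcMatrix_mulVec_apply, hw, Pi.one_apply]
  obtain ⟨X, -, hX⟩ := exists_max_image univ w ⟨v, mem_univ v⟩
  obtain ⟨m, -, hm⟩ := exists_min_image univ w ⟨v, mem_univ v⟩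
  have hdeg : ∀ u, (G.degree u : ℝ) ≤ G.maxDegree := fun u => mod_cast G.degree_le_maxDegree u
  have hXsum : ∀ u, ∑ u' ∈ G.neighborFinset u, w u' ≤ G.degree u * w X := fun u => by
    have := sum_le_card_nsmul _ _ _ fun u' (_ : u' ∈ G.neighborFinset u) => hX u' (mem_univ u')
    rwa [nsmul_eq_mul, card_neighborFinset_eq_degree] at this
  have hmsum : ∀ u, G.degree u * w m ≤ ∑ u' ∈ G.neighborFinset u, w u' := fun u => by
    have := card_nsmul_le_sum _ _ _ fun u' (_ : u' ∈ G.neighborFinset u) => hm u' (mem_univ u')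
    rwa [nsmul_eq_mul, card_neighborFinset_eq_degree] at this
  have hX0 : 0 < w X := by
    by_contra! hX0
    nlinarith [hw' X, mul_le_mul_of_nonneg_left (hXsum X) hl,
      mul_nonpos_of_nonneg_of_nonpos (mul_nonneg hl (G.degree X).cast_nonneg) hX0]
  suffices 0 < w m from (this.trans_le (hm v (mem_univ v))).le
  by_contra! hm0
  have h1 : 1 ≤ (1 + l) * w m + l * G.maxDegree * w X := by
    nlinarith [hw' m, mul_le_mul_of_nonneg_left (hXsum m) hl,
      mul_le_mul_of_nonneg_left (mul_le_mul_of_nonneg_right (hdeg m) hX0.le) hl]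
  have h2 : (1 + l) * w X + l * G.maxDegree * w m ≤ 1 := by
    nlinarith [hw' X, mul_le_mul_of_nonneg_left (hmsum X) hl,
      mul_le_mul_of_nonneg_left (mul_le_mul_of_nonpos_right (hdeg X) hm0) hl]
  have hΔ : 0 ≤ l * G.maxDegree := mul_nonneg hl G.maxDegree.cast_nonneg
  have hgap : 0 ≤ (1 + l) ^ 2 - (l * G.maxDegree) ^ 2 := by nlinarith
  nlinarith [mul_le_mul_of_nonneg_left h1 (by linarith : (0 : ℝ) ≤ 1 + l),
    mul_le_mul_of_nonneg_left h2 hΔ, mul_nonpos_of_nonneg_of_nonpos hgap hm0]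

lemma hcMatrix_add_smul_lapMatrix :
    G.hcMatrix l + l • G.lapMatrix ℝ = diagonal fun v => 1 + (G.degree v + 1) * l := by
  ext i j
  by_cases h : i = j
  · subst h; simp [hcMatrix, lapMatrix, degMatrix]; ring
  · simp [hcMatrix, lapMatrix, degMatrix, h]

lemma mul_sum_one_div_le_sum_of_le_hcMatrix_mulVec (hl : 0 ≤ l) (hlΔ : l * G.maxDegree < 1)
    {x : V → ℝ} {c : ℝ} (hc : 0 ≤ c) (hx : ∀ v, c ≤ (G.hcMatrix l *ᵥ x) v) :
    c * ∑ v, 1 / (1 + (G.degree v + 1) * l) ≤ ∑ v, x v := by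
  have hM := posDef_hcMatrix hl hlΔ
  obtain ⟨w, hw⟩ := mulVec_surjective_iff_isUnit.mpr hM.isUnit 1
  have ht : (G.hcMatrix l + l • G.lapMatrix ℝ) *ᵥ (fun v => 1 / (1 + (G.degree v + 1) * l))
      = 1 := by
    ext v
    rw [hcMatrix_add_smul_lapMatrix, mulVec_diagonal, Pi.one_apply, mul_one_div_cancel]
    positivity
  calc c * ∑ v, 1 / (1 + (G.degree v + 1) * l)
      ≤ c * ∑ v, w v := mul_le_mul_of_nonneg_left
        (sum_le_sum_of_mulVec_eq_one hM.posSemidef (G.posSemidef_lapMatrix ℝ) hl hw ht) hc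
    _ ≤ ∑ v, x v := mul_sum_le_sum_of_le_mulVec isSymm_hcMatrix
        (nonneg_of_hcMatrix_mulVec_eq_one hl hlΔ hw) hw hx

end SimpleGraph

section HardCore

variable {V : Type*} [Fintype V] (G : SimpleGraph V) (l : ℝ)

lemma mem_indepSets {I : Finset V} : I ∈ indepSets G ↔ ∀ u ∈ I, ∀ v ∈ I, ¬ G.Adj u v := by
  simp [indepSets]

lemma insert_mem_indepSets_iff {v : V} {I : Finset V} :
    insert v I ∈ indepSets G ↔ I ∈ indepSets G ∧ ∀ u ∈ I, ¬ G.Adj v u := by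
  simp only [mem_indepSets, mem_insert, forall_eq_or_imp, G.irrefl, not_false_eq_true, true_and]
  constructor
  · rintro ⟨hv, hI⟩
    exact ⟨fun u hu => (hI u hu).2, hv⟩
  · rintro ⟨hI, hv⟩
    exact ⟨hv, fun u hu => ⟨fun h => hv u hu h.symm, hI u hu⟩⟩

/-- The partition function `Q_v = Z_{G - N[v]}`. -/
noncomputable def hcZAvoiding (v : V) : ℝ :=
  ∑ I ∈ (indepSets G).filter (fun I => v ∉ I ∧ ∀ u ∈ I, ¬ G.Adj v u), l ^ I.card

lemma sum_indepSets_filter_mem (v : V) :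
    ∑ I ∈ (indepSets G).filter (v ∈ ·), l ^ I.card = l * hcZAvoiding G l v := by
  rw [hcZAvoiding, mul_sum]
  refine sum_nbij' (·.erase v) (insert v) ?_ ?_ ?_ ?_ ?_
  · intro I hI
    simp only [mem_filter] at hI ⊢
    obtain ⟨hindep, hadj⟩ := (insert_mem_indepSets_iff G (v := v) (I := I.erase v)).mp
      (by rw [insert_erase hI.2]; exact hI.1)
    exact ⟨hindep, notMem_erase v I, hadj⟩
  · intro I hI
    simp only [mem_filter] at hI ⊢
    exact ⟨(insert_mem_indepSets_iff G).mpr ⟨hI.1, hI.2.2⟩, mem_insert_self v I⟩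
  · intro I hI
    exact insert_erase (mem_filter.mp hI).2
  · intro I hI
    exact erase_insert (mem_filter.mp hI).2.1
  · intro I hI
    rw [← pow_succ', card_erase_add_one (mem_filter.mp hI).2]

lemma sum_card_mul_pow_eq :
    ∑ I ∈ indepSets G, (I.card : ℝ) * l ^ I.card = l * ∑ v, hcZAvoiding G l v := by
  simp_rw [mul_sum, ← sum_indepSets_filter_mem, sum_filter]
  rw [sum_comm]
  refine sum_congr rfl fun I _ => ?_
  rw [sum_ite_mem, univ_inter, sum_const, nsmul_eq_mul]

variable {G l}

lemma hcZ_pos (hl : 0 ≤ l) : 0 < hcZ G l :=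
  sum_pos' (fun I _ => by positivity) ⟨∅, by simp [mem_indepSets], by simp⟩

lemma hcZ_le_hcMatrix_mulVec (hl : 0 ≤ l) (v : V) :
    hcZ G l ≤ (G.hcMatrix l *ᵥ hcZAvoiding G l) v := by
  set N := insert v (G.neighborFinset v)
  have hcover : ∀ I : Finset V,
      l ^ I.card ≤ (if v ∉ I ∧ ∀ u ∈ I, ¬ G.Adj v u then l ^ I.card else 0)
        + ∑ u ∈ N, if u ∈ I then l ^ I.card else 0 := by
    intro I
    by_cases hI : v ∉ I ∧ ∀ u ∈ I, ¬ G.Adj v u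
    · rw [if_pos hI, le_add_iff_nonneg_right]
      exact sum_nonneg fun u _ => by positivity
    · obtain ⟨u, huN, huI⟩ : ∃ u ∈ N, u ∈ I := by
        simp only [not_and_or, not_not, not_forall] at hI
        rcases hI with hv | ⟨u, hu, hadj⟩
        · exact ⟨v, mem_insert_self v _, hv⟩
        · exact ⟨u, mem_insert_of_mem ((G.mem_neighborFinset v u).mpr hadj), hu⟩
      rw [if_neg hI, zero_add]
      exact (if_pos huI).symm.le.trans
        (single_le_sum (f := fun u => if u ∈ I then l ^ I.card else 0)
          (fun u _ => by positivity) huN)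
  calc hcZ G l
      ≤ ∑ I ∈ indepSets G, ((if v ∉ I ∧ ∀ u ∈ I, ¬ G.Adj v u then l ^ I.card else 0)
          + ∑ u ∈ N, if u ∈ I then l ^ I.card else 0) := sum_le_sum fun I _ => hcover I
    _ = hcZAvoiding G l v + ∑ u ∈ N, l * hcZAvoiding G l u := by
      simp_rw [sum_add_distrib, ← sum_indepSets_filter_mem, sum_filter]
      rw [sum_comm, hcZAvoiding, sum_filter]
    _ = (G.hcMatrix l *ᵥ hcZAvoiding G l) v := by
      rw [SimpleGraph.hcMatrix_mulVec_apply, sum_insert (G.notMem_neighborFinset_self v),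
        ← mul_sum]
      ring

end HardCore

lemma mul_lt_one_of_le_three_div_add_one_sq {l d : ℝ} (hl : 0 ≤ l) (hd : 0 ≤ d)
    (h : l ≤ 3 / (d + 1) ^ 2) : l * d < 1 := by
  rw [le_div_iff₀ (by positivity)] at h
  nlinarith [mul_nonneg hl (sq_nonneg (d - 1))]

theorem stmt0_general {V : Type*} [Fintype V] (G : SimpleGraph V)
    (l : ℝ) (hl : 0 < l)
    (hl' : l ≤ 3 / ((G.maxDegree : ℝ) + 1) ^ 2) :
    (1 / (Fintype.card V : ℝ)) *
        ∑ u : V, l / (1 + ((G.degree u : ℝ) + 1) * l) ≤ hcE G l := by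
  have hlΔ := mul_lt_one_of_le_three_div_add_one_sq hl.le G.maxDegree.cast_nonneg hl'
  have hZ : 0 < hcZ G l := hcZ_pos hl.le
  have key : hcZ G l * ∑ v, 1 / (1 + ((G.degree v : ℝ) + 1) * l) ≤ ∑ v, hcZAvoiding G l v :=
    G.mul_sum_one_div_le_sum_of_le_hcMatrix_mulVec hl.le hlΔ hZ.le (hcZ_le_hcMatrix_mulVec hl.le)
  have hE : hcE G l = 1 / (Fintype.card V : ℝ) * (l * (∑ v, hcZAvoiding G l v) / hcZ G l) := by
    rw [hcE, sum_card_mul_pow_eq]; ring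
  have hsum : ∑ u : V, l / (1 + ((G.degree u : ℝ) + 1) * l)
      = l * ∑ v, 1 / (1 + ((G.degree v : ℝ) + 1) * l) := by
    simp_rw [mul_sum, mul_one_div]
  rw [hE, hsum]
  refine mul_le_mul_of_nonneg_left ?_ (by positivity)
  rw [le_div_iff₀ hZ, mul_assoc, mul_comm (∑ _, _)]
  exact mul_le_mul_of_nonneg_left key hl.le

theorem stmt0 {V : Type*} [Fintype V] (G : SimpleGraph V)
    (hn : 1 ≤ Fintype.card V) (l : ℝ) (hl : 0 < l)
    (hl' : l ≤ 3 / ((G.maxDegree : ℝ) + 1) ^ 2) :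
    (1 / (Fintype.card V : ℝ)) *
        ∑ u : V, l / (1 + ((G.degree u : ℝ) + 1) * l) ≤ hcE G l :=
  stmt0_general G l hl hl'
end

section
/- Let G be a finite simple graph on n ≥ 1 vertices. Then for every real λ with 0 < λ < 1/(2n−1), one has V_G(λ) ≥ λ/(1+nλ)², where λ/(1+nλ)² is the variance fraction of the complete graph K_n. -/
/-!
Write `μ` for the mean size of a random independent set and `t = nλ`. Since sizes are integers,
`𝔼|I|² ≥ 𝔼|I|`, so the variance is at least `μ(1 - μ)`, and it suffices to trap `μ` in
`[t/(1+t), 1/(1+t)]`, where `μ(1 - μ) ≥ t/(1+t)²`. The lower bound comes from the empty set and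
the `n` singletons, which are independent in every graph. For the upper bound, the weight
`((1+t)|I| - 1) λ^|I|` is nonnegative except at `I = ∅`, so its sum over the independent sets is
at most its sum over all subsets of the vertices, which is `(1+λ)^(n-1) (t + t² - 1 - λ)` and is
nonpositive because `λ < 1/(2n-1)`.
-/

open scoped Classical

/-- The variance fraction `V_G(λ) = λ (d/dλ) E_G(λ)`, i.e. `(1/n)` times the variance
of the size of an independent set from the hard-core model:
`V_G(λ) = (1/n)(𝔼|I|² - (𝔼|I|)²)`. -/
noncomputable def hcV {V : Type*} [Fintype V] (G : SimpleGraph V) (l : ℝ) : ℝ :=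
  ((∑ I ∈ indepSets G, (I.card : ℝ) ^ 2 * l ^ I.card) / hcZ G l
      - ((∑ I ∈ indepSets G, (I.card : ℝ) * l ^ I.card) / hcZ G l) ^ 2) /
    (Fintype.card V : ℝ)

open Finset

section Families

variable {α : Type*} {l : ℝ}

theorem one_le_sum_pow_card {T : Finset (Finset α)} (hT : ∅ ∈ T) (hl : 0 ≤ l) :
    1 ≤ ∑ I ∈ T, l ^ #I := by
  simpa using single_le_sum (f := fun I : Finset α => l ^ #I) (fun I _ => by positivity) hT

theorem sum_card_mul_pow_le_sum_card_sq_mul_pow (T : Finset (Finset α)) (hl : 0 ≤ l) :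
    ∑ I ∈ T, (#I : ℝ) * l ^ #I ≤ ∑ I ∈ T, (#I : ℝ) ^ 2 * l ^ #I := by
  refine sum_le_sum fun I _ => mul_le_mul_of_nonneg_right ?_ (by positivity)
  exact_mod_cast Nat.le_self_pow two_ne_zero #I

theorem sum_pow_card_sub_sum_card_mul_pow_le_one {T : Finset (Finset α)} (hT : ∅ ∈ T)
    (hl : 0 ≤ l) : ∑ I ∈ T, l ^ #I - ∑ I ∈ T, (#I : ℝ) * l ^ #I ≤ 1 := by
  rw [← sum_sub_distrib, ← add_sum_erase T _ hT]
  have hrest : ∑ I ∈ T.erase ∅, (l ^ #I - (#I : ℝ) * l ^ #I) ≤ 0 := by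
    refine sum_nonpos fun I hI => ?_
    have hI : (1 : ℝ) ≤ #I := by
      exact_mod_cast card_pos.mpr (nonempty_iff_ne_empty.mpr (ne_of_mem_erase hI))
    nlinarith [pow_nonneg hl #I]
  simpa using hrest

theorem card_mul_le_sum_card_mul_pow [Fintype α] {T : Finset (Finset α)}
    (hT : ∀ v, {v} ∈ T) (hl : 0 ≤ l) :
    Fintype.card α * l ≤ ∑ I ∈ T, (#I : ℝ) * l ^ #I := by
  calc Fintype.card α * l = ∑ I ∈ univ.image ({·} : α → Finset α), (#I : ℝ) * l ^ #I := by
        rw [sum_image fun a _ b _ h => singleton_injective h]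
        simp [card_univ]
    _ ≤ ∑ I ∈ T, (#I : ℝ) * l ^ #I := by
        refine sum_le_sum_of_subset_of_nonneg ?_ fun I _ _ => by positivity
        simpa [subset_iff] using hT

theorem card_mul_mul_sum_pow_card_le [Fintype α] {T : Finset (Finset α)} (hT : ∅ ∈ T)
    (hT₁ : ∀ v, {v} ∈ T) (hl : 0 ≤ l) :
    Fintype.card α * l * ∑ I ∈ T, l ^ #I ≤
      (1 + Fintype.card α * l) * ∑ I ∈ T, (#I : ℝ) * l ^ #I := by
  have hnl : 0 ≤ Fintype.card α * l := by positivity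
  nlinarith [mul_le_mul_of_nonneg_left (sum_pow_card_sub_sum_card_mul_pow_le_one hT hl) hnl,
    card_mul_le_sum_card_mul_pow hT₁ hl]

theorem one_add_mul_sum_powerset_card_mul_pow [DecidableEq α] (s : Finset α) (l : ℝ) :
    (1 + l) * ∑ I ∈ s.powerset, (#I : ℝ) * l ^ #I = #s * l * (1 + l) ^ #s := by
  induction s using Finset.induction_on with
  | empty => simp
  | @insert a s ha ih =>
    have hcube : ∑ I ∈ s.powerset, l ^ #I = (1 + l) ^ #s := by
      simpa [add_comm] using sum_pow_mul_eq_add_pow l 1 s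
    have hshift : ∑ I ∈ s.powerset, (#(insert a I) : ℝ) * l ^ #(insert a I)
        = l * ∑ I ∈ s.powerset, (#I : ℝ) * l ^ #I + l * ∑ I ∈ s.powerset, l ^ #I := by
      rw [mul_sum, mul_sum, ← sum_add_distrib]
      refine sum_congr rfl fun I hI => ?_
      rw [card_insert_of_notMem fun h => ha (mem_powerset.mp hI h)]
      push_cast
      ring
    rw [sum_powerset_insert ha, hshift, hcube, card_insert_of_notMem ha]
    push_cast
    linear_combination (1 + l) * ih

theorem one_add_mul_sum_card_mul_pow_le_sum_pow_card [Fintype α] {T : Finset (Finset α)}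
    (hT : ∅ ∈ T) (hl : 0 ≤ l)
    (hsmall : Fintype.card α * l + (Fintype.card α * l) ^ 2 ≤ 1 + l) :
    (1 + Fintype.card α * l) * ∑ I ∈ T, (#I : ℝ) * l ^ #I ≤ ∑ I ∈ T, l ^ #I := by
  set c : ℝ := 1 + Fintype.card α * l
  have hc : 1 ≤ c := by simp only [c]; nlinarith [Nat.cast_nonneg (α := ℝ) (Fintype.card α)]
  have hcomp : ∑ I ∈ T, (c * #I - 1) * l ^ #I ≤
      ∑ I ∈ (univ : Finset α).powerset, (c * #I - 1) * l ^ #I := by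
    refine sum_le_sum_of_subset_of_nonneg (fun I _ => mem_powerset.mpr (subset_univ I)) ?_
    intro I _ hI
    have hI : (1 : ℝ) ≤ #I := by
      exact_mod_cast card_pos.mpr (nonempty_iff_ne_empty.mpr (by rintro rfl; exact hI hT))
    exact mul_nonneg (by nlinarith) (by positivity)
  have hcube : (1 + l) * ∑ I ∈ (univ : Finset α).powerset, (c * #I - 1) * l ^ #I
      = (1 + l) ^ Fintype.card α * (c * (Fintype.card α * l) - (1 + l)) := by
    have hcard := one_add_mul_sum_powerset_card_mul_pow (univ : Finset α) l
    have hpow : ∑ I ∈ (univ : Finset α).powerset, l ^ #I = (1 + l) ^ Fintype.card α := by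
      simpa [add_comm] using sum_pow_mul_eq_add_pow l 1 (univ : Finset α)
    simp only [sub_mul, sum_sub_distrib, one_mul, mul_assoc, ← mul_sum, hpow]
    rw [card_univ] at hcard
    linear_combination c * hcard
  have hneg : ∑ I ∈ (univ : Finset α).powerset, (c * #I - 1) * l ^ #I ≤ 0 := by
    refine nonpos_of_mul_nonpos_right ?_ (by linarith : (0 : ℝ) < 1 + l)
    rw [hcube]
    exact mul_nonpos_of_nonneg_of_nonpos (by positivity) (by simp only [c]; nlinarith)
  have hsum : ∑ I ∈ T, (c * #I - 1) * l ^ #I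
      = c * ∑ I ∈ T, (#I : ℝ) * l ^ #I - ∑ I ∈ T, l ^ #I := by
    rw [mul_sum, ← sum_sub_distrib]
    exact sum_congr rfl fun I _ => by ring
  linarith

end Families

theorem le_variance_of_mean_mem_Icc {Z S₁ S₂ t : ℝ} (hZ : 0 < Z) (h₁₂ : S₁ ≤ S₂)
    (hlow : t * Z ≤ (1 + t) * S₁) (hup : (1 + t) * S₁ ≤ Z) (ht : 0 ≤ t) :
    t / (1 + t) ^ 2 ≤ S₂ / Z - (S₁ / Z) ^ 2 := by
  set μ := S₁ / Z
  set a := t / (1 + t)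
  have hμlow : a ≤ μ := by
    rw [div_le_div_iff₀ (by linarith) hZ]; linarith
  have hμup : μ ≤ 1 - a := by
    rw [one_sub_div (by linarith), add_sub_cancel_right, div_le_div_iff₀ hZ (by linarith)]
    linarith
  calc t / (1 + t) ^ 2 = a * (1 - a) := by simp only [a]; field_simp; ring
    _ ≤ μ * (1 - μ) := by nlinarith [mul_nonneg (sub_nonneg.mpr hμlow) (sub_nonneg.mpr hμup)]
    _ ≤ S₂ / Z - μ ^ 2 := by linarith [div_le_div_of_nonneg_right h₁₂ hZ.le]

theorem stmt2 {V : Type*} [Fintype V] (G : SimpleGraph V)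
    (hn : 1 ≤ Fintype.card V) (l : ℝ) (hl : 0 < l)
    (hl' : l < 1 / (2 * (Fintype.card V : ℝ) - 1)) :
    l / (1 + (Fintype.card V : ℝ) * l) ^ 2 ≤ hcV G l := by
  have hn₁ : (1 : ℝ) ≤ Fintype.card V := by exact_mod_cast hn
  have hsmall : Fintype.card V * l + (Fintype.card V * l) ^ 2 ≤ 1 + l := by
    have h : l * (2 * Fintype.card V - 1) < 1 := (lt_div_iff₀ (by linarith)).mp hl'
    have hnl : Fintype.card V * l < 1 := by nlinarith
    nlinarith [mul_le_mul_of_nonneg_left hnl.le (by positivity : (0 : ℝ) ≤ Fintype.card V * l)]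
  have hempty : ∅ ∈ indepSets G := by simp [indepSets]
  have hsingle : ∀ v, {v} ∈ indepSets G := by simp [indepSets]
  have hvar := le_variance_of_mean_mem_Icc
    (lt_of_lt_of_le one_pos (one_le_sum_pow_card hempty hl.le))
    (sum_card_mul_pow_le_sum_card_sq_mul_pow (indepSets G) hl.le)
    (card_mul_mul_sum_pow_card_le hempty hsingle hl.le)
    (one_add_mul_sum_card_mul_pow_le_sum_pow_card hempty hl.le hsmall)
    (by positivity)
  rw [hcV, le_div_iff₀ (by linarith)]
  calc l / (1 + Fintype.card V * l) ^ 2 * Fintype.card V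
      = Fintype.card V * l / (1 + Fintype.card V * l) ^ 2 := by ring
    _ ≤ _ := hvar
end

section
/- Fix n ≥ 0 and let P(x) = Σ_{k=0}^n a_k x^k and Q(x) = Σ_{k=0}^n b_k x^k be real polynomials with a_0 = b_0 = 1 and a_k, b_k ≥ 0 for all k. If P ≥_VAR Q, then P ≥_OCC Q; that is, if V_P(x) ≥ V_Q(x) for all x ≥ 0, then x·P′(x)/P(x) ≥ x·Q′(x)/Q(x) for all x ≥ 0. -/
/-!
`x P'(x)/P(x)` and `V_P(x)` are the mean and the variance of the distribution with weights
proportional to `a_k x^k`, and `V_P = x · (x P'/P)'`. So `V_P ≥ V_Q` on `[0, ∞)` makes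
`x P'/P - x Q'/Q` nondecreasing there, and it vanishes at `0`.
-/

open Polynomial

/-- The "variance fraction" functional of a polynomial:
`V_P(x) = (x² P″(x) + x P′(x))/P(x) − x² P′(x)²/P(x)²`. -/
noncomputable def Vp (P : Polynomial ℝ) (x : ℝ) : ℝ :=
  (x ^ 2 * (Polynomial.derivative (Polynomial.derivative P)).eval x
      + x * (Polynomial.derivative P).eval x) / P.eval x
    - x ^ 2 * ((Polynomial.derivative P).eval x) ^ 2 / (P.eval x) ^ 2

namespace Polynomial

noncomputable def occupation (P : ℝ[X]) (x : ℝ) : ℝ :=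
  x * (derivative P).eval x / P.eval x

variable {P Q : ℝ[X]}

theorem coeff_zero_le_eval (hP : ∀ k, 0 ≤ P.coeff k) {x : ℝ} (hx : 0 ≤ x) :
    P.coeff 0 ≤ P.eval x := by
  rw [eval_eq_sum_range]
  simpa using Finset.single_le_sum (f := fun i => P.coeff i * x ^ i)
    (fun i _ => mul_nonneg (hP i) (pow_nonneg hx i))
    (Finset.mem_range.mpr P.natDegree.succ_pos)

@[simp]
theorem occupation_zero (P : ℝ[X]) : occupation P 0 = 0 := by
  simp [occupation]

theorem hasDerivAt_occupation {x : ℝ} (hx : P.eval x ≠ 0) :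
    HasDerivAt (occupation P)
      ((((derivative P).eval x + x * (derivative (derivative P)).eval x) * P.eval x
        - x * (derivative P).eval x * (derivative P).eval x) / P.eval x ^ 2) x :=
  (((hasDerivAt_id x).mul ((derivative P).hasDerivAt x)).fun_div (P.hasDerivAt x) hx).congr_deriv
    (by simp)

theorem hasDerivAt_occupation_Vp_div {x : ℝ} (hx₀ : x ≠ 0) (hx : P.eval x ≠ 0) :
    HasDerivAt (occupation P) (Vp P x / x) x :=
  (hasDerivAt_occupation hx).congr_deriv (by unfold Vp; field_simp; ring)

theorem monotoneOn_occupation_sub (hP : ∀ x, 0 ≤ x → P.eval x ≠ 0)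
    (hQ : ∀ x, 0 ≤ x → Q.eval x ≠ 0) (hV : ∀ x, 0 ≤ x → Vp Q x ≤ Vp P x) :
    MonotoneOn (occupation P - occupation Q) (Set.Ici 0) := by
  refine monotoneOn_of_hasDerivWithinAt_nonneg (f' := fun x => Vp P x / x - Vp Q x / x)
    (convex_Ici 0) (fun x hx => ?_) (fun x hx => ?_) (fun x hx => ?_)
  · exact ((hasDerivAt_occupation (hP x hx)).sub
      (hasDerivAt_occupation (hQ x hx))).continuousAt.continuousWithinAt
  · rw [interior_Ici, Set.mem_Ioi] at hx
    exact ((hasDerivAt_occupation_Vp_div hx.ne' (hP x hx.le)).sub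
      (hasDerivAt_occupation_Vp_div hx.ne' (hQ x hx.le))).hasDerivWithinAt
  · rw [interior_Ici, Set.mem_Ioi] at hx
    rw [← sub_div]
    exact div_nonneg (sub_nonneg.mpr (hV x hx.le)) hx.le

theorem occupation_le_occupation_of_Vp_le (hP : ∀ x, 0 ≤ x → P.eval x ≠ 0)
    (hQ : ∀ x, 0 ≤ x → Q.eval x ≠ 0) (hV : ∀ x, 0 ≤ x → Vp Q x ≤ Vp P x) {x : ℝ}
    (hx : 0 ≤ x) : occupation Q x ≤ occupation P x := by
  simpa using monotoneOn_occupation_sub hP hQ hV Set.self_mem_Ici (Set.mem_Ici.mpr hx) hx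

end Polynomial

theorem stmt4_general (P Q : Polynomial ℝ)
    (hP0 : P.coeff 0 = 1) (hQ0 : Q.coeff 0 = 1)
    (hP : ∀ k, 0 ≤ P.coeff k) (hQ : ∀ k, 0 ≤ Q.coeff k)
    (hVAR : ∀ x : ℝ, 0 ≤ x → Vp Q x ≤ Vp P x) :
    ∀ x : ℝ, 0 ≤ x →
      x * (Polynomial.derivative Q).eval x / Q.eval x
        ≤ x * (Polynomial.derivative P).eval x / P.eval x := by
  have eval_pos {R : ℝ[X]} (hR0 : R.coeff 0 = 1) (hR : ∀ k, 0 ≤ R.coeff k) {x : ℝ}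
      (hx : 0 ≤ x) : 0 < R.eval x :=
    zero_lt_one.trans_le (hR0 ▸ coeff_zero_le_eval hR hx)
  exact fun x hx => occupation_le_occupation_of_Vp_le
    (fun t ht => (eval_pos hP0 hP ht).ne') (fun t ht => (eval_pos hQ0 hQ ht).ne') hVAR hx

/-- VAR implies OCC for polynomials with constant coefficient 1 and
nonnegative coefficients. -/
theorem stmt4 (n : ℕ) (P Q : Polynomial ℝ)
    (hPdeg : P.natDegree ≤ n) (hQdeg : Q.natDegree ≤ n)
    (hP0 : P.coeff 0 = 1) (hQ0 : Q.coeff 0 = 1)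
    (hP : ∀ k, 0 ≤ P.coeff k) (hQ : ∀ k, 0 ≤ Q.coeff k)
    (hVAR : ∀ x : ℝ, 0 ≤ x → Vp Q x ≤ Vp P x) :
    ∀ x : ℝ, 0 ≤ x →
      x * (Polynomial.derivative Q).eval x / Q.eval x
        ≤ x * (Polynomial.derivative P).eval x / P.eval x :=
  stmt4_general P Q hP0 hQ0 hP hQ hVAR
end

section
/- Let P(x) = 1 + 4x + 2x² + 2x³ and Q(x) = 1 + 2x + x² + x³. Then P ≥_FV Q holds, but P ≥_VAR Q fails; indeed V_P(1) = 74/81 < 26/25 = V_Q(1). -/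
open Polynomial

/-- For `P = 1+4x+2x²+2x³` and `Q = 1+2x+x²+x³`, `P ≥_FV Q` holds but
`P ≥_VAR Q` fails; indeed `V_P(1) = 74/81 < 26/25 = V_Q(1)`. -/
theorem stmt8 :
    let P : Polynomial ℝ := C 1 + C 4 * X + C 2 * X ^ 2 + C 2 * X ^ 3
    let Q : Polynomial ℝ := C 1 + C 2 * X + C 1 * X ^ 2 + C 1 * X ^ 3
    (∀ k : ℕ, k ≤ 2 → P.coeff k * Q.coeff (k + 1) ≤ Q.coeff k * P.coeff (k + 1)) ∧
      ¬ (∀ x : ℝ, 0 ≤ x → Vp Q x ≤ Vp P x) ∧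
      Vp P 1 = 74 / 81 ∧ Vp Q 1 = 26 / 25 ∧ Vp P 1 < Vp Q 1 := by
  intro P Q
  have hP : Vp P 1 = 74 / 81 := by
    simp only [Vp, P, derivative_add, derivative_mul, derivative_C, derivative_X,
      derivative_X_pow]
    norm_num
  have hQ : Vp Q 1 = 26 / 25 := by
    simp only [Vp, Q, derivative_add, derivative_mul, derivative_C, derivative_X,
      derivative_X_pow]
    norm_num
  refine ⟨?_, ?_, hP, hQ, by rw [hP, hQ]; norm_num⟩
  · intro k hk
    interval_cases k <;>
      simp [P, Q, coeff_add, coeff_C, coeff_X, coeff_X_pow, coeff_one] <;> norm_num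
  · intro h
    have := h 1 (by norm_num)
    rw [hP, hQ] at this
    norm_num at this
end

section
/- Let P(x) = 1 + 10x + 210x² + 21x³ + 21x⁴ + 21x⁵ and Q(x) = 1 + 10x + 10x² + x³ + x⁴ + x⁵. Then P ≥_FV Q holds, but P ≥_VAR Q fails; indeed V_P(1) = 18619/20164 < 53/48 = V_Q(1). -/
open Polynomial

/-- For `P = 1+10x+210x²+21x³+21x⁴+21x⁵` and `Q = 1+10x+10x²+x³+x⁴+x⁵`,
`P ≥_FV Q` holds but `P ≥_VAR Q` fails; indeed
`V_P(1) = 18619/20164 < 53/48 = V_Q(1)`. -/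
theorem stmt9 :
    let P : Polynomial ℝ := C 1 + C 10 * X + C 210 * X ^ 2 + C 21 * X ^ 3
      + C 21 * X ^ 4 + C 21 * X ^ 5
    let Q : Polynomial ℝ := C 1 + C 10 * X + C 10 * X ^ 2 + C 1 * X ^ 3
      + C 1 * X ^ 4 + C 1 * X ^ 5
    (∀ k : ℕ, k ≤ 4 → P.coeff k * Q.coeff (k + 1) ≤ Q.coeff k * P.coeff (k + 1)) ∧
      ¬ (∀ x : ℝ, 0 ≤ x → Vp Q x ≤ Vp P x) ∧
      Vp P 1 = 18619 / 20164 ∧ Vp Q 1 = 53 / 48 ∧ Vp P 1 < Vp Q 1 := by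
  intro P Q
  have hP : Vp P 1 = 18619 / 20164 := by
    simp only [Vp, P, derivative_add, derivative_mul, derivative_C, derivative_X,
      derivative_X_pow, derivative_one, eval_add, eval_mul, eval_pow, eval_C, eval_X,
      eval_one, eval_natCast, eval_zero]
    norm_num
  have hQ : Vp Q 1 = 53 / 48 := by
    simp only [Vp, Q, derivative_add, derivative_mul, derivative_C, derivative_X,
      derivative_X_pow, derivative_one, eval_add, eval_mul, eval_pow, eval_C, eval_X,
      eval_one, eval_natCast, eval_zero]
    norm_num
  refine ⟨?_, ?_, hP, hQ, by rw [hP, hQ]; norm_num⟩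
  · intro k hk
    interval_cases k <;>
      simp only [P, Q, coeff_add, coeff_C, coeff_C_mul, coeff_X, coeff_X_pow,
        coeff_one] <;> norm_num
  · intro h
    have := h 1 (by norm_num)
    rw [hP, hQ] at this
    norm_num at this
end

section
/- Let P(x) = 1 + 10x + x² + 20010x³ + 2001x⁴ + 2001x⁵ and Q(x) = 1 + 10x + x² + 10x³ + x⁴ + x⁵. Then P ≥_FV Q holds, but P ≥_VAR Q fails; indeed V_P(1) = 68604293/192384192 < 293/192 = V_Q(1). -/
open Polynomial

/-- For `P = 1+10x+x²+20010x³+2001x⁴+2001x⁵` and `Q = 1+10x+x²+10x³+x⁴+x⁵`,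
`P ≥_FV Q` holds but `P ≥_VAR Q` fails; indeed
`V_P(1) = 68604293/192384192 < 293/192 = V_Q(1)`. -/
theorem stmt10 :
    let P : Polynomial ℝ := C 1 + C 10 * X + C 1 * X ^ 2 + C 20010 * X ^ 3
      + C 2001 * X ^ 4 + C 2001 * X ^ 5
    let Q : Polynomial ℝ := C 1 + C 10 * X + C 1 * X ^ 2 + C 10 * X ^ 3
      + C 1 * X ^ 4 + C 1 * X ^ 5
    (∀ k : ℕ, k ≤ 4 → P.coeff k * Q.coeff (k + 1) ≤ Q.coeff k * P.coeff (k + 1)) ∧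
      ¬ (∀ x : ℝ, 0 ≤ x → Vp Q x ≤ Vp P x) ∧
      Vp P 1 = 68604293 / 192384192 ∧ Vp Q 1 = 293 / 192 ∧ Vp P 1 < Vp Q 1 := by
  intro P Q
  have hP : Vp P 1 = 68604293 / 192384192 := by norm_num [Vp, P]
  have hQ : Vp Q 1 = 293 / 192 := by norm_num [Vp, Q]
  have hlt : Vp P 1 < Vp Q 1 := by rw [hP, hQ]; norm_num
  refine ⟨?_, fun h => (h 1 zero_le_one).not_gt hlt, hP, hQ, hlt⟩
  intro k hk
  interval_cases k <;> norm_num [P, Q, coeff_one, coeff_X, coeff_C, coeff_X_pow]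
end

section
/- Let G = K_{1,2}, the star with two leaves (equivalently the path on 3 vertices, with hard-core partition function Z_G(λ) = 1 + 3λ + λ²). Then for every real λ > 1 + √5, (1+λ)·V_G(λ) > E_G(λ). In particular the inequality (1+λ)·V_G(λ) ≤ E_G(λ) fails for K_{1,2}. -/
open scoped Classical

/-- The star `K_{1,2}` with two leaves, i.e. the path on 3 vertices `0 - 1 - 2`;
its hard-core partition function is `1 + 3λ + λ²`. -/
def K12 : SimpleGraph (Fin 3) := SimpleGraph.fromRel (fun i j => (i : ℕ) + 1 = (j : ℕ))


lemma hS_K12 : indepSets K12 = {∅, {0}, {1}, {2}, {0,2}} := by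
  ext I
  simp only [indepSets, Finset.mem_filter, Finset.mem_univ, true_and, K12,
    SimpleGraph.fromRel_adj]
  revert I; decide

lemma hcard02 : (({0,2} : Finset (Fin 3)).card) = 2 := by decide

lemma sumZ_K12 (l : ℝ) : ∑ I ∈ indepSets K12, l ^ I.card = 1 + 3*l + l^2 := by
  rw [hS_K12, Finset.sum_insert (by decide), Finset.sum_insert (by decide),
    Finset.sum_insert (by decide), Finset.sum_insert (by decide), Finset.sum_singleton, hcard02]
  norm_num; ring

lemma sum1_K12 (l : ℝ) : ∑ I ∈ indepSets K12, (I.card : ℝ) * l ^ I.card = 3*l + 2*l^2 := by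
  rw [hS_K12, Finset.sum_insert (by decide), Finset.sum_insert (by decide),
    Finset.sum_insert (by decide), Finset.sum_insert (by decide), Finset.sum_singleton, hcard02]
  norm_num; ring

lemma sum2_K12 (l : ℝ) : ∑ I ∈ indepSets K12, (I.card : ℝ)^2 * l ^ I.card = 3*l + 4*l^2 := by
  rw [hS_K12, Finset.sum_insert (by decide), Finset.sum_insert (by decide),
    Finset.sum_insert (by decide), Finset.sum_insert (by decide), Finset.sum_singleton, hcard02]
  norm_num; ring

/-- For `λ > 1 + √5` we have `(1+λ) V_{K_{1,2}}(λ) > E_{K_{1,2}}(λ)`; in particular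
the inequality `(1+λ) V_G(λ) ≤ E_G(λ)` fails for `G = K_{1,2}`. -/
theorem stmt17 (l : ℝ) (hl : 1 + Real.sqrt 5 < l) :
    hcE K12 l < (1 + l) * hcV K12 l := by
  have h5 : (2:ℝ) < Real.sqrt 5 := by
    nlinarith [Real.sq_sqrt (by norm_num : (5:ℝ) ≥ 0), Real.sqrt_nonneg 5]
  have hl3 : (3:ℝ) < l := by linarith
  have hZ : hcZ K12 l = 1 + 3*l + l^2 := sumZ_K12 l
  have hZpos : (0:ℝ) < 1 + 3*l + l^2 := by nlinarith
  have hkey : l^2 - 2*l - 4 > 0 := by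
    nlinarith [Real.sq_sqrt (by norm_num : (5:ℝ) ≥ 0), Real.sqrt_nonneg 5]
  rw [hcE, hcV, hZ, sum1_K12, sum2_K12]
  have hn : (Fintype.card (Fin 3) : ℝ) = 3 := by norm_num
  rw [hn]
  have hZ0 : (1 + 3*l + l^2) ≠ 0 := ne_of_gt hZpos
  have hlpos : (0:ℝ) < l := by linarith
  rw [← sub_pos]
  have heq : (1 + l) * (((3 * l + 4 * l ^ 2) / (1 + 3 * l + l ^ 2)
        - ((3 * l + 2 * l ^ 2) / (1 + 3 * l + l ^ 2)) ^ 2) / 3)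
      - (3 * l + 2 * l ^ 2) / (3 * (1 + 3 * l + l ^ 2))
      = (l^2 * (l^2 - 2*l - 4)) / (3 * (1 + 3*l + l^2)^2) := by
    field_simp
    ring
  rw [heq]
  apply div_pos
  · nlinarith
  · positivity
end

section
/- There exist a finite simple graph G on n vertices with no isolated vertices and a real λ > 0 such that E_G(λ) > (1/n)·Σ_{uv∈E(G)} ((d_u+d_v)/(d_u·d_v))·E_{K_{d_u,d_v}}(λ). That is, the edge-based degree-sequence upper bound on the free energy density of Sah–Sawhney–Stoner–Zhao does not extend to an upper bound on the occupancy fraction. -/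
open scoped Classical

/-! The counterexample is the 4-cycle with a pendant vertex at two opposite corners, at `λ = 5`.
Its independence polynomial is `1 + 6λ + 9λ² + 4λ³ + λ⁴`, so `E_G(5) = 2240/4143 ≈ 0.5407`.
An independent set of `K_{a,b}` lies inside one side, which gives `Z_{K_{a,b}} = (1+λ)^a + (1+λ)^b - 1`
and a closed form for `E_{K_{a,b}}`. The graph has four edges with degrees `{3, 2}` and two with
degrees `{3, 1}`, and the edge sum evaluates to `(800/251 + 2180/663)/12 ≈ 0.5396`. -/

open Finset

section PowersetSums

variable {R : Type*} [CommSemiring R]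

theorem sum_range_choose_mul_mul_pow (x : R) (n : ℕ) :
    ∑ m ∈ range (n + 1), (n.choose m : R) * (m * x ^ m) = n * x * (1 + x) ^ (n - 1) := by
  cases n with
  | zero => simp
  | succ k =>
    have hchoose (m : ℕ) : ((k + 1).choose (m + 1) : R) * (m + 1 : ℕ) = (k + 1 : ℕ) * k.choose m := by
      rw [← Nat.cast_mul, ← Nat.cast_mul, Nat.add_one_mul_choose_eq]
    rw [sum_range_succ', add_comm (1 : R), add_pow]
    simp only [Nat.cast_zero, zero_mul, mul_zero, add_zero, one_pow, mul_one, Nat.add_sub_cancel,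
      mul_sum]
    refine sum_congr rfl fun m _ => ?_
    rw [← mul_assoc, hchoose m]
    ring

variable {α : Type*} [Fintype α]

theorem sum_finset_pow_card (x : R) : ∑ s : Finset α, x ^ #s = (1 + x) ^ Fintype.card α := by
  simpa [powerset_univ, add_comm] using sum_pow_mul_eq_add_pow x 1 (univ : Finset α)

theorem sum_finset_card_mul_pow_card (x : R) :
    ∑ s : Finset α, (#s : R) * x ^ #s = Fintype.card α * x * (1 + x) ^ (Fintype.card α - 1) := by
  rw [← powerset_univ, sum_powerset_apply_card (fun k => (k : R) * x ^ k), card_univ,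
    ← sum_range_choose_mul_mul_pow]
  simp only [nsmul_eq_mul]

end PowersetSums

section CompleteBipartite

variable {α β : Type*}

theorem independent_completeBipartiteGraph_iff {I : Finset (α ⊕ β)} :
    (∀ u ∈ I, ∀ v ∈ I, ¬ (completeBipartiteGraph α β).Adj u v) ↔
      I.toLeft = ∅ ∨ I.toRight = ∅ := by
  constructor
  · intro hI
    by_contra! h
    obtain ⟨a, ha⟩ := h.1
    obtain ⟨b, hb⟩ := h.2
    exact hI _ (mem_toLeft.1 ha) _ (mem_toRight.1 hb) (by simp [completeBipartiteGraph])
  · rintro (h | h) (u | u) hu (v | v) hv <;>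
      simp_all [completeBipartiteGraph, Finset.eq_empty_iff_forall_notMem]

variable [Fintype α] [Fintype β]

theorem sum_indepSets_completeBipartiteGraph {M : Type*} [AddCommMonoid M] (f : ℕ → M) :
    ∑ I ∈ indepSets (completeBipartiteGraph α β), f #I + f 0 =
      ∑ s : Finset α, f #s + ∑ t : Finset β, f #t := by
  set L : Finset (Finset (α ⊕ β)) := {I | I.toRight = ∅}
  set R : Finset (Finset (α ⊕ β)) := {I | I.toLeft = ∅}
  have hunion : indepSets (completeBipartiteGraph α β) = L ∪ R := by
    ext I
    simp only [indepSets, L, R, mem_union, mem_filter, mem_univ, true_and]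
    rw [independent_completeBipartiteGraph_iff, or_comm]
  have hinter : L ∩ R = {∅} := by
    ext I
    rw [mem_inter, mem_filter_univ, mem_filter_univ, mem_singleton]
    constructor
    · rintro ⟨hr, hl⟩
      rw [← toLeft_disjSum_toRight (u := I), hl, hr, disjSum_empty, map_empty]
    · rintro rfl
      constructor <;> ext <;> simp
  have hleft : ∑ I ∈ L, f #I = ∑ s : Finset α, f #s :=
    sum_nbij' toLeft (·.disjSum ∅) (fun _ _ => mem_univ _)
      (fun _ _ => (mem_filter_univ _).2 toRight_disjSum)
      (fun I hI => by rw [← (mem_filter_univ I).1 hI, toLeft_disjSum_toRight])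
      (fun _ _ => toLeft_disjSum)
      (fun I hI => by
        rw [← card_toLeft_add_card_toRight (u := I), (mem_filter_univ I).1 hI, card_empty, add_zero])
  have hright : ∑ I ∈ R, f #I = ∑ t : Finset β, f #t :=
    sum_nbij' toRight (disjSum ∅) (fun _ _ => mem_univ _)
      (fun _ _ => (mem_filter_univ _).2 toLeft_disjSum)
      (fun I hI => by rw [← (mem_filter_univ I).1 hI, toLeft_disjSum_toRight])
      (fun _ _ => toRight_disjSum)
      (fun I hI => by
        rw [← card_toLeft_add_card_toRight (u := I), (mem_filter_univ I).1 hI, card_empty, zero_add])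
  rw [hunion, ← hleft, ← hright, ← sum_union_inter, hinter, sum_singleton, card_empty]


theorem hcZ_completeBipartiteGraph (l : ℝ) :
    hcZ (completeBipartiteGraph α β) l =
      (1 + l) ^ Fintype.card α + (1 + l) ^ Fintype.card β - 1 := by
  have h := sum_indepSets_completeBipartiteGraph (α := α) (β := β) (l ^ ·)
  simp only [sum_finset_pow_card, pow_zero] at h
  rw [hcZ]
  linarith

theorem hcE_completeBipartiteGraph (l : ℝ) :
    hcE (completeBipartiteGraph α β) l =
      (Fintype.card α * l * (1 + l) ^ (Fintype.card α - 1) +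
          Fintype.card β * l * (1 + l) ^ (Fintype.card β - 1)) /
        ((Fintype.card α + Fintype.card β) *
          ((1 + l) ^ Fintype.card α + (1 + l) ^ Fintype.card β - 1)) := by
  have h := sum_indepSets_completeBipartiteGraph (α := α) (β := β) fun k => (k : ℝ) * l ^ k
  simp only [sum_finset_card_mul_pow_card, Nat.cast_zero, zero_mul, add_zero] at h
  rw [hcE, h, hcZ_completeBipartiteGraph, Fintype.card_sum, Nat.cast_add]

end CompleteBipartite

section IndependencePolynomial

variable {V : Type*} [Fintype V]

theorem sum_indepSets_eq_sum_range {M : Type*} [AddCommMonoid M] (G : SimpleGraph V) (f : ℕ → M) :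
    ∑ I ∈ indepSets G, f #I =
      ∑ k ∈ range (Fintype.card V + 1), #{I ∈ indepSets G | #I = k} • f k := by
  rw [← sum_fiberwise_of_maps_to (g := card) (t := range (Fintype.card V + 1))
    (fun I _ => mem_range_succ_iff.2 (card_le_univ I))]
  refine sum_congr rfl fun k _ => ?_
  rw [sum_congr rfl fun I hI => congrArg f (mem_filter.1 hI).2, sum_const]

-- `indepSets` filters with classical decidability; this form can be evaluated by `decide`.
theorem indepSets_eq_filter [DecidableEq V] (G : SimpleGraph V) [DecidableRel G.Adj] :
    indepSets G = ({I | ∀ u ∈ I, ∀ v ∈ I, ¬ G.Adj u v} : Finset (Finset V)) := by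
  ext I
  simp only [indepSets, mem_filter_univ]

end IndependencePolynomial

-- The 4-cycle 0-1-4-2 with pendant vertices 3 and 5 attached at the opposite vertices 0 and 4.
def squareWithTwoPendants : SimpleGraph (Fin 6) :=
  SimpleGraph.fromRel fun a b => (a, b) ∈ [(0, 1), (0, 2), (0, 3), (1, 4), (2, 4), (4, 5)]

namespace squareWithTwoPendants

instance : DecidableRel squareWithTwoPendants.Adj :=
  inferInstanceAs (DecidableRel (SimpleGraph.fromRel _).Adj)

theorem neighborFinset_eq (u : Fin 6) [Fintype (squareWithTwoPendants.neighborSet u)] :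
    squareWithTwoPendants.neighborFinset u = ![{1, 2, 3}, {0, 4}, {0, 4}, {0}, {1, 2, 5}, {4}] u := by
  ext v
  rw [SimpleGraph.mem_neighborFinset]
  revert v
  fin_cases u <;> decide

theorem degree_eq (u : Fin 6) [Fintype (squareWithTwoPendants.neighborSet u)] :
    squareWithTwoPendants.degree u = ![3, 2, 2, 1, 3, 1] u := by
  rw [← SimpleGraph.card_neighborFinset_eq_degree, neighborFinset_eq]
  fin_cases u <;> rfl

theorem card_indepSets_filter_card (k : Fin 7) :
    #{I ∈ indepSets squareWithTwoPendants | #I = k} = ![1, 6, 9, 4, 1, 0, 0] k := by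
  rw [indepSets_eq_filter]
  revert k
  decide

theorem sum_indepSets {M : Type*} [AddCommMonoid M] (f : ℕ → M) :
    ∑ I ∈ indepSets squareWithTwoPendants, f #I = f 0 + 6 • f 1 + 9 • f 2 + 4 • f 3 + f 4 := by
  rw [sum_indepSets_eq_sum_range, Fintype.card_fin, sum_range, Fin.sum_univ_seven]
  simp only [card_indepSets_filter_card]
  simp

theorem hcE_eq (l : ℝ) :
    hcE squareWithTwoPendants l =
      (6 * l + 18 * l ^ 2 + 12 * l ^ 3 + 4 * l ^ 4) /
        (6 * (1 + 6 * l + 9 * l ^ 2 + 4 * l ^ 3 + l ^ 4)) := by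
  rw [hcE, hcZ, sum_indepSets (l ^ ·), sum_indepSets fun k => (k : ℝ) * l ^ k, Fintype.card_fin]
  simp only [nsmul_eq_mul]
  push_cast
  ring

end squareWithTwoPendants

/-- There is a graph `G` with no isolated vertices and a fugacity `λ > 0` for which
the occupancy fraction exceeds the edge-based degree-sequence expression
`(1/n) Σ_{uv ∈ E(G)} ((d_u+d_v)/(d_u d_v)) E_{K_{d_u,d_v}}(λ)`; the sum over edges is
written as half the sum over ordered adjacent pairs. -/
theorem stmt18 : ∃ (n : ℕ) (G : SimpleGraph (Fin n)) (l : ℝ), 0 < l ∧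
    (∀ u, 0 < G.degree u) ∧
    (1 / (n : ℝ)) * ((1 / 2) * ∑ u : Fin n, ∑ v ∈ G.neighborFinset u,
        (((G.degree u : ℝ) + (G.degree v : ℝ)) / ((G.degree u : ℝ) * (G.degree v : ℝ))) *
          hcE (completeBipartiteGraph (Fin (G.degree u)) (Fin (G.degree v))) l)
      < hcE G l := by
  refine ⟨6, squareWithTwoPendants, 5, by norm_num, fun u => ?_, ?_⟩
  · rw [squareWithTwoPendants.degree_eq]
    fin_cases u <;> simp
  · -- The degrees occur in the types `Fin (G.degree u)`; they can be rewritten only after the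
    -- closed form for `E_{K_{a,b}}` has replaced those types by their cardinalities.
    simp only [Fin.sum_univ_six, squareWithTwoPendants.neighborFinset_eq,
      hcE_completeBipartiteGraph, Fintype.card_fin]
    simp only [squareWithTwoPendants.degree_eq]
    simp only [Matrix.cons_val, sum_insert, sum_singleton, mem_insert, mem_singleton, Fin.reduceEq,
      or_self, not_false_eq_true]
    norm_num [squareWithTwoPendants.hcE_eq]
end
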